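/- If the ∇Y move preserves the property of being not intrinsically knotted in the reverse direction (i.e., if G'' obtained from G' by a ∇Y move is nIK, then G' is nIK), and G″ above is 2-apex (hence nIK), then G_{10,26} − (4,5) is not intrinsically knotted. -/

import Mathlib

open SimpleGraph

/-- Delete a vertex `v` from a graph on `ℕ` (remove all edges at `v`). -/
def delVert (G : SimpleGraph ℕ) (v : ℕ) : SimpleGraph ℕ where
  Adj a b := G.Adj a b ∧ a ≠ v ∧ b ≠ v
  symm := ⟨fun a b h => ⟨h.1.symm, h.2.2, h.2.1⟩⟩
  loopless := ⟨fun a h => G.ne_of_adj h.1 rfl⟩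

/-- `H` is a minor of `G`: disjoint nonempty connected branch sets in `G`,
one for each vertex of `H`, with edges of `H` realized between branch sets. -/
def IsMinor {W V : Type} (H : SimpleGraph W) (G : SimpleGraph V) : Prop :=
  ∃ f : W → Set V,
    (∀ w, (G.induce (f w)).Connected) ∧
    (∀ w₁ w₂, w₁ ≠ w₂ → Disjoint (f w₁) (f w₂)) ∧
    (∀ w₁ w₂, H.Adj w₁ w₂ → ∃ a ∈ f w₁, ∃ b ∈ f w₂, G.Adj a b)

/-- Planarity via Wagner's theorem: no `K₅` minor and no `K_{3,3}` minor. -/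
def IsPlanar {V : Type} (G : SimpleGraph V) : Prop :=
  ¬ IsMinor (completeGraph (Fin 5)) G ∧
    ¬ IsMinor (completeBipartiteGraph (Fin 3) (Fin 3)) G

/-- Contract the edge `(a,b)` of `G`, merging `b` into `a` (merged vertex labeled `a`). -/
def contractEdge (G : SimpleGraph ℕ) (a b : ℕ) : SimpleGraph ℕ :=
  SimpleGraph.fromRel (fun x y => ∃ u v : ℕ, G.Adj u v ∧
    (if u = b then a else u) = x ∧ (if v = b then a else v) = y)

/-- The graph `G_{10,26}` with the edge list from the appendix. -/
def G1026 : SimpleGraph ℕ :=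
  SimpleGraph.fromEdgeSet
    {s(1,2), s(1,3), s(1,4), s(1,5), s(1,8), s(1,9), s(2,4), s(2,7), s(2,8),
     s(2,10), s(3,4), s(3,7), s(3,8), s(3,10), s(4,5), s(4,6), s(4,8), s(4,9),
     s(5,7), s(5,9), s(5,10), s(6,7), s(6,8), s(6,9), s(6,10), s(8,9)}

/-- `G′` is obtained from `G` by a `∇Y` move: a triangle `a, b, c` of `G` is replaced by
a new vertex `w` (isolated in `G`) joined to `a`, `b`, `c`. -/
def IsDeltaY (G G' : SimpleGraph ℕ) : Prop :=
  ∃ a b c w : ℕ, G.Adj a b ∧ G.Adj a c ∧ G.Adj b c ∧ w ∉ G.support ∧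
    G' = (G.deleteEdges {s(a,b), s(a,c), s(b,c)}) ⊔
      SimpleGraph.fromEdgeSet {s(w,a), s(w,b), s(w,c)}

/-- `G″`: obtained from `G_{10,26}` by deleting the edge `(4,5)` and performing a
`∇Y` move on the triangle `(1,5,9)` with new vertex 11. -/
def Gpp : SimpleGraph ℕ :=
  (G1026.deleteEdges {s(4,5), s(1,5), s(1,9), s(5,9)}) ⊔
    SimpleGraph.fromEdgeSet {s(11,1), s(11,5), s(11,9)}

theorem G1026_support_subset : G1026.support ⊆ Set.Icc 1 10 := by
  rintro v ⟨w, hvw⟩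
  simp only [G1026, fromEdgeSet_adj, Set.mem_insert_iff, Set.mem_singleton_iff, Sym2.eq,
    Sym2.rel_iff', Prod.mk.eta, Prod.swap_prod_mk, Set.mem_ofPred_eq, Prod.mk.injEq] at hvw
  simp only [Set.mem_Icc]
  omega

theorem isDeltaY_G1026_deleteEdges_Gpp : IsDeltaY (G1026.deleteEdges {s(4,5)}) Gpp := by
  have hfresh : 11 ∉ (G1026.deleteEdges {s(4,5)}).support := fun h11 => by
    simpa using G1026_support_subset (support_mono (deleteEdges_le _) h11)
  refine ⟨1, 5, 9, 11, by simp [G1026], by simp [G1026], by simp [G1026], hfresh, ?_⟩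
  rw [Gpp, deleteEdges_deleteEdges, Set.singleton_union]

/-- Assuming (a) every 2-apex graph is not intrinsically knotted, and (b) the `∇Y` move
preserves non-intrinsic-knottedness in the reverse direction (if `G″`, obtained from
`G′` by a `∇Y` move, is nIK then `G′` is nIK), and given that `G″` above is 2-apex,
the graph `G_{10,26} − (4,5)` is not intrinsically knotted. -/
theorem stmt16 (IK : SimpleGraph ℕ → Prop)
    (h2apex : ∀ G : SimpleGraph ℕ,
      (∃ u v : ℕ, IsPlanar (delVert (delVert G u) v)) → ¬ IK G)
    (hDY : ∀ G G' : SimpleGraph ℕ, IsDeltaY G G' → ¬ IK G' → ¬ IK G)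
    (hGpp : ∃ u v : ℕ, IsPlanar (delVert (delVert Gpp u) v)) :
    ¬ IK (G1026.deleteEdges {s(4,5)}) :=
  hDY _ Gpp isDeltaY_G1026_deleteEdges_Gpp (h2apex Gpp hGpp)
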